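/- For Berglund–Hübsch data (A, q, G), with ĉ = d − 2Σ_j q_j ∈ ℤ, the identity Ell(W/G, z + 1, τ) = (−1)^{ĉ} Ell(W/G, z, τ) holds at every (z, τ) ∈ ℂ × H at which all theta-function denominators appearing on both sides are nonzero. -/
import Mathlib


/-- The Jacobi theta function
`Θ(ν, τ) = i q^{1/8} e^{−iπν}(1 − e^{2πiν}) ∏_{n≥1} (1 − q^n)(1 − q^n e^{2πiν})(1 − q^n e^{−2πiν})`
with `q = e^{2πiτ}` and `q^{1/8} = e^{iπτ/4}`. -/
noncomputable def Theta (ν τ : ℂ) : ℂ :=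
  Complex.I * Complex.exp (Real.pi * Complex.I * τ / 4) *
    Complex.exp (-(Real.pi * Complex.I * ν)) *
    (1 - Complex.exp (2 * Real.pi * Complex.I * ν)) *
    ∏' n : ℕ,
      ((1 - Complex.exp (2 * Real.pi * Complex.I * τ) ^ (n + 1)) *
        (1 - Complex.exp (2 * Real.pi * Complex.I * τ) ^ (n + 1) *
          Complex.exp (2 * Real.pi * Complex.I * ν)) *
        (1 - Complex.exp (2 * Real.pi * Complex.I * τ) ^ (n + 1) *
          Complex.exp (-(2 * Real.pi * Complex.I * ν))))

/-- The Berglund–Hübsch elliptic genus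
`Ell(W/G, z, τ) = (1/|G|) Σ_{n,n₁∈G} Π_j e^{−2πizθ_j(n)} ·
Θ((1−q_j)z − θ_j(n)τ − θ_j(n₁), τ) / Θ(q_j z + θ_j(n)τ + θ_j(n₁), τ)`,
where the group `G ⊆ ℚ^d/ℤ^d` is encoded by the finite set of its canonical
representatives with components in `[0,1)`, so that `θ_j(n) = n j`. -/
noncomputable def Ell (d : ℕ) (q : Fin d → ℚ) (G : Finset (Fin d → ℚ)) (z τ : ℂ) : ℂ :=
  (G.card : ℂ)⁻¹ *
    ∑ n ∈ G, ∑ n₁ ∈ G, ∏ j : Fin d,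
      Complex.exp (-(2 * Real.pi * Complex.I * z * (n j : ℂ))) *
        Theta ((1 - (q j : ℂ)) * z - (n j : ℂ) * τ - (n₁ j : ℂ)) τ /
        Theta ((q j : ℂ) * z + (n j : ℂ) * τ + (n₁ j : ℂ)) τ

/-- All theta-function denominators in the defining formula of `Ell` are
nonzero at `(z, τ)`. -/
def EllDenomNE (d : ℕ) (q : Fin d → ℚ) (G : Finset (Fin d → ℚ)) (z τ : ℂ) : Prop :=
  ∀ n ∈ G, ∀ n₁ ∈ G, ∀ j : Fin d,
    Theta ((q j : ℂ) * z + (n j : ℂ) * τ + (n₁ j : ℂ)) τ ≠ 0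

lemma exp_two_pi_int (m : ℤ) : Complex.exp (2 * Real.pi * Complex.I * m) = 1 := by
  rw [show ((2:ℂ) * Real.pi * Complex.I * m) = m * (2 * Real.pi * Complex.I) by ring]
  exact Complex.exp_int_mul_two_pi_mul_I m

lemma neg_one_zpow_inv (m : ℤ) : (((-1:ℂ))^m)⁻¹ = (-1:ℂ)^m := by
  rcases Int.even_or_odd m with h | h
  · rw [h.neg_one_zpow]; norm_num
  · rw [h.neg_one_zpow]; norm_num

lemma Theta_add_int (ν τ : ℂ) (m : ℤ) :
    Theta (ν + m) τ = (-1:ℂ)^m * Theta ν τ := by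
  have h2 : Complex.exp (2 * Real.pi * Complex.I * (ν + m))
      = Complex.exp (2 * Real.pi * Complex.I * ν) := by
    rw [mul_add, Complex.exp_add, exp_two_pi_int, mul_one]
  have h2' : Complex.exp (-(2 * Real.pi * Complex.I * (ν + m)))
      = Complex.exp (-(2 * Real.pi * Complex.I * ν)) := by
    rw [show -(2 * (Real.pi:ℂ) * Complex.I * (ν + m)) = -(2 * Real.pi * Complex.I * ν) + 2 * Real.pi * Complex.I * (-m : ℤ) by push_cast; ring,
      Complex.exp_add, exp_two_pi_int, mul_one]
  have h1 : Complex.exp (-(Real.pi * Complex.I * (ν + m)))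
      = (-1:ℂ)^m * Complex.exp (-(Real.pi * Complex.I * ν)) := by
    rw [show -((Real.pi:ℂ) * Complex.I * (ν + m)) = (-m : ℤ) * (Real.pi * Complex.I) + -(Real.pi * Complex.I * ν) by push_cast; ring,
      Complex.exp_add, Complex.exp_int_mul, Complex.exp_pi_mul_I, zpow_neg, neg_one_zpow_inv]
  rw [Theta, Theta, h1, h2, h2']
  ring

/-- `Ell(W/G, z + 1, τ) = (−1)^ĉ Ell(W/G, z, τ)`, where
`ĉ = d − 2Σ_j q_j ∈ ℤ`. -/
theorem Ell_z_add_one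
    (d : ℕ) (hd : 1 ≤ d)
    (A : Matrix (Fin d) (Fin d) ℕ)
    (hA : (A.map (fun a => (a : ℚ))).det ≠ 0)
    (q : Fin d → ℚ)
    (hq : (A.map (fun a => (a : ℚ))).mulVec q = fun _ => 1)
    (hqpos : ∀ j, 0 < q j)
    (G : Finset (Fin d → ℚ))
    (hGrep : ∀ p ∈ G, ∀ j, 0 ≤ p j ∧ p j < 1)
    (hGaut : ∀ p ∈ G, ∀ i, ∃ t : ℤ, ∑ j, (A i j : ℚ) * p j = (t : ℚ))
    (hGzero : (fun _ => 0 : Fin d → ℚ) ∈ G)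
    (hGadd : ∀ p ∈ G, ∀ p' ∈ G, (fun j => Int.fract (p j + p' j)) ∈ G)
    (hGneg : ∀ p ∈ G, (fun j => Int.fract (-(p j))) ∈ G)
    (hJW : (fun j => Int.fract (q j)) ∈ G)
    (hGsum : ∀ p ∈ G, ∃ t : ℤ, ∑ j, p j = (t : ℚ))
    (c : ℤ) (hc : (c : ℚ) = (d : ℚ) - 2 * ∑ j, q j)
    (z τ : ℂ) (hτ : 0 < τ.im)
    (hden : EllDenomNE d q G z τ) (hden' : EllDenomNE d q G (z + 1) τ) :
    Ell d q G (z + 1) τ = (-1 : ℂ) ^ c * Ell d q G z τ := by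
  classical
  -- the sum of the charges is an integer
  obtain ⟨t0, ht0⟩ := hGsum _ hJW
  have hs : ∑ j, q j = ((t0 + ∑ j, ⌊q j⌋ : ℤ) : ℚ) := by
    push_cast
    rw [← ht0, ← Finset.sum_add_distrib]
    exact Finset.sum_congr rfl fun j _ => (Int.fract_add_floor (q j)).symm
  set s : ℤ := t0 + ∑ j, ⌊q j⌋ with hsdef
  have hcd : c = (d : ℤ) - 2 * s := by
    have : (c : ℚ) = ((d : ℤ) - 2 * s : ℤ) := by rw [hc, hs]; push_cast; ring
    exact_mod_cast this
  -- (-1)^c = (-1)^d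
  have hpow : ((-1 : ℂ)) ^ c = (-1 : ℂ) ^ (d : ℕ) := by
    have h1 : ((-1:ℂ)) ^ ((2:ℤ) * s) = 1 := by
      rw [show (2:ℤ) * s = s + s by ring]
      exact Even.neg_one_zpow ⟨s, rfl⟩
    rw [hcd, zpow_sub₀ (by norm_num : (-1:ℂ) ≠ 0), h1, div_one, zpow_natCast]
  -- the shift bijection on G
  set σ : (Fin d → ℚ) → (Fin d → ℚ) := fun p j => Int.fract (p j + q j) with hσdef
  set σ' : (Fin d → ℚ) → (Fin d → ℚ) := fun p j => Int.fract (p j - q j) with hσ'def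
  have hσmem : ∀ p ∈ G, σ p ∈ G := by
    intro p hp
    have h := hGadd p hp _ hJW
    have : (fun j => Int.fract (p j + Int.fract (q j))) = σ p := by
      funext j
      rw [hσdef, Int.fract_eq_fract]
      exact ⟨-⌊q j⌋, by rw [Int.fract]; push_cast; ring⟩
    rwa [this] at h
  have hσ'mem : ∀ p ∈ G, σ' p ∈ G := by
    intro p hp
    have h := hGadd p hp _ (hGneg _ hJW)
    have : (fun j => Int.fract (p j + Int.fract (-(Int.fract (q j))))) = σ' p := by
      funext j
      rw [hσ'def, Int.fract_eq_fract]
      refine ⟨⌊q j⌋ - ⌊-(Int.fract (q j))⌋, ?_⟩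
      rw [Int.fract, Int.fract]
      push_cast; ring
    rwa [this] at h
  have hleft : ∀ p ∈ G, σ' (σ p) = p := by
    intro p hp
    funext j
    show Int.fract (Int.fract (p j + q j) - q j) = p j
    have : Int.fract (Int.fract (p j + q j) - q j) = Int.fract (p j) := by
      rw [Int.fract_eq_fract]
      exact ⟨-⌊p j + q j⌋, by rw [Int.fract]; push_cast; ring⟩
    rw [this, Int.fract_eq_self.mpr (hGrep p hp j)]
  have hright : ∀ p ∈ G, σ (σ' p) = p := by
    intro p hp
    funext j
    show Int.fract (Int.fract (p j - q j) + q j) = p j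
    have : Int.fract (Int.fract (p j - q j) + q j) = Int.fract (p j) := by
      rw [Int.fract_eq_fract]
      exact ⟨-⌊p j - q j⌋, by rw [Int.fract]; push_cast; ring⟩
    rw [this, Int.fract_eq_self.mpr (hGrep p hp j)]
  -- the key one-factor identity
  have keyj : ∀ n₁ ∈ G, ∀ (n : Fin d → ℚ), ∀ j : Fin d,
      Complex.exp (-(2 * Real.pi * Complex.I * (z + 1) * (n j : ℂ))) *
        Theta ((1 - (q j : ℂ)) * (z + 1) - (n j : ℂ) * τ - (n₁ j : ℂ)) τ /
        Theta ((q j : ℂ) * (z + 1) + (n j : ℂ) * τ + (n₁ j : ℂ)) τ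
      = (-1 : ℂ) * Complex.exp (-(2 * Real.pi * Complex.I * (n j : ℂ))) *
        (Complex.exp (-(2 * Real.pi * Complex.I * z * (n j : ℂ))) *
          Theta ((1 - (q j : ℂ)) * z - (n j : ℂ) * τ - ((σ n₁) j : ℂ)) τ /
          Theta ((q j : ℂ) * z + (n j : ℂ) * τ + ((σ n₁) j : ℂ)) τ) := by
    intro n₁ hn₁ n j
    set m : ℤ := ⌊(n₁ j : ℚ) + q j⌋ with hmdef
    have hσval : (((σ n₁) j : ℚ) : ℂ) = (n₁ j : ℂ) + (q j : ℂ) - (m : ℂ) := by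
      show ((Int.fract (n₁ j + q j) : ℚ) : ℂ) = _
      rw [Int.fract]
      push_cast
      ring
    have h1 : (1 - (q j : ℂ)) * (z + 1) - (n j : ℂ) * τ - (n₁ j : ℂ)
        = ((1 - (q j : ℂ)) * z - (n j : ℂ) * τ - ((σ n₁) j : ℂ)) + ((1 - m : ℤ) : ℂ) := by
      rw [hσval]; push_cast; ring
    have h2 : (q j : ℂ) * (z + 1) + (n j : ℂ) * τ + (n₁ j : ℂ)
        = ((q j : ℂ) * z + (n j : ℂ) * τ + ((σ n₁) j : ℂ)) + ((m : ℤ) : ℂ) := by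
      rw [hσval]; push_cast; ring
    have hexp : Complex.exp (-(2 * Real.pi * Complex.I * (z + 1) * (n j : ℂ)))
        = Complex.exp (-(2 * Real.pi * Complex.I * (n j : ℂ))) *
          Complex.exp (-(2 * Real.pi * Complex.I * z * (n j : ℂ))) := by
      rw [← Complex.exp_add]; ring_nf
    rw [h1, h2, Theta_add_int, Theta_add_int, hexp]
    rcases Int.even_or_odd m with h | h
    · have ho : Odd (1 - m) := by
        rcases h with ⟨k, hk⟩
        exact ⟨-k, by omega⟩
      rw [h.neg_one_zpow, ho.neg_one_zpow]
      ring
    · have he : Even (1 - m) := by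
        rcases h with ⟨k, hk⟩
        exact ⟨-k, by omega⟩
      rw [h.neg_one_zpow, he.neg_one_zpow, neg_one_mul, one_mul, div_neg]
      ring
  -- the product over j
  have keyprod : ∀ n ∈ G, ∀ n₁ ∈ G,
      (∏ j : Fin d,
        Complex.exp (-(2 * Real.pi * Complex.I * (z + 1) * (n j : ℂ))) *
          Theta ((1 - (q j : ℂ)) * (z + 1) - (n j : ℂ) * τ - (n₁ j : ℂ)) τ /
          Theta ((q j : ℂ) * (z + 1) + (n j : ℂ) * τ + (n₁ j : ℂ)) τ)
      = (-1 : ℂ) ^ (d : ℕ) * ∏ j : Fin d,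
          Complex.exp (-(2 * Real.pi * Complex.I * z * (n j : ℂ))) *
            Theta ((1 - (q j : ℂ)) * z - (n j : ℂ) * τ - ((σ n₁) j : ℂ)) τ /
            Theta ((q j : ℂ) * z + (n j : ℂ) * τ + ((σ n₁) j : ℂ)) τ := by
    intro n hn n₁ hn₁
    obtain ⟨t, ht⟩ := hGsum n hn
    rw [Finset.prod_congr rfl (fun j _ => keyj n₁ hn₁ n j), Finset.prod_mul_distrib,
      Finset.prod_mul_distrib, Finset.prod_const, ← Complex.exp_sum]
    have h0 : (∑ j : Fin d, ((n j : ℚ) : ℂ)) = ((t : ℤ) : ℂ) := by exact_mod_cast ht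
    have hsum : (∑ j : Fin d, -(2 * (Real.pi : ℂ) * Complex.I * ((n j : ℚ) : ℂ)))
        = 2 * Real.pi * Complex.I * ((-t : ℤ) : ℂ) := by
      rw [show (∑ j : Fin d, -(2 * (Real.pi : ℂ) * Complex.I * ((n j : ℚ) : ℂ)))
          = -(2 * (Real.pi : ℂ) * Complex.I * ∑ j : Fin d, ((n j : ℚ) : ℂ)) by
        rw [Finset.mul_sum, ← Finset.sum_neg_distrib]]
      rw [h0]; push_cast; ring
    rw [hsum, exp_two_pi_int, mul_one, Finset.card_univ, Fintype.card_fin]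
  -- reindexing the inner sum
  have keysum : ∀ n ∈ G,
      (∑ n₁ ∈ G, ∏ j : Fin d,
        Complex.exp (-(2 * Real.pi * Complex.I * (z + 1) * (n j : ℂ))) *
          Theta ((1 - (q j : ℂ)) * (z + 1) - (n j : ℂ) * τ - (n₁ j : ℂ)) τ /
          Theta ((q j : ℂ) * (z + 1) + (n j : ℂ) * τ + (n₁ j : ℂ)) τ)
      = (-1 : ℂ) ^ (d : ℕ) * ∑ n₁ ∈ G, ∏ j : Fin d,
          Complex.exp (-(2 * Real.pi * Complex.I * z * (n j : ℂ))) *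
            Theta ((1 - (q j : ℂ)) * z - (n j : ℂ) * τ - (n₁ j : ℂ)) τ /
            Theta ((q j : ℂ) * z + (n j : ℂ) * τ + (n₁ j : ℂ)) τ := by
    intro n hn
    rw [Finset.mul_sum]
    exact Finset.sum_nbij' σ σ' hσmem hσ'mem hleft hright
      (fun n₁ hn₁ => keyprod n hn n₁ hn₁)
  -- conclusion
  rw [Ell, Ell, hpow, Finset.sum_congr rfl keysum, ← Finset.mul_sum]
  ring
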